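/- There is no operation J₂ on the involutive bisemilattice A of Figure 2 (the Płonka sum over the four-element semilattice {0 < i, j < k = i∨j} with two-element Boolean fibres A_0 = {0,1}, A_i = {0_i, 1_i}, A_j = {0_j, 1_j} and trivial top fibre A_k = {0_k}, with all Płonka homomorphisms surjective) satisfying the identities K9–K12 together with K1–K8; that is, A cannot be expanded to a K-algebra. -/

import Mathlib

/-- The operations of a Bochvar-type algebra ⟨A, ∨, ¬, J₂, 0, 1⟩. -/
class KOps (α : Type*) where
  sup : α → α → α
  neg : α → α
  J : α → α
  zero : α
  one : α

namespace KOps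

variable {α : Type*} [KOps α]

/-- The meet, defined à la De Morgan: x ∧ y := ¬(¬x ∨ ¬y). -/
def meet (x y : α) : α := neg (sup (neg x) (neg y))

end KOps

open KOps

/-- A K-algebra: an algebra satisfying the identities K1–K12 axiomatising
the variety generated by Bochvar algebras. (K5 holds by definition of `meet`.) -/
class KAlgebra (α : Type*) [KOps α] : Prop where
  K1 : ∀ x : α, sup x x = x
  K2 : ∀ x y : α, sup x y = sup y x
  K3 : ∀ x y z : α, sup (sup x y) z = sup x (sup y z)
  K4 : ∀ x : α, neg (neg x) = x
  K5 : ∀ x y : α, meet x y = neg (sup (neg x) (neg y))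
  K6 : ∀ x y : α, meet x (sup (neg x) y) = meet x y
  K7 : ∀ x : α, sup zero x = x
  K8 : (one : α) = neg zero
  K9 : ∀ x : α, sup (J x) (neg (J x)) = one
  K10 : ∀ x y : α, sup x (J y) = sup x (J (sup x y))
  K11 : ∀ x : α, meet x (J x) = x
  K12 : ∀ x : α, J (meet x (neg x)) = zero

/-- The seven-element involutive bisemilattice of Figure 2: the Płonka sum over
the semilattice {0 < i, j < k = i ∨ j} with two-element Boolean fibres
A₀ = {z, o}, Aᵢ = {zi, oi}, Aⱼ = {zj, oj} and trivial top fibre A_k = {zk}. -/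
inductive Fig : Type
  | z | o | zi | oi | zj | oj | zk
deriving DecidableEq

namespace Fig

/-- The index of the fibre of an element (0 = bottom, 1 = i, 2 = j, 3 = k). -/
def fib : Fig → ℕ
  | z => 0 | o => 0 | zi => 1 | oi => 1 | zj => 2 | oj => 2 | zk => 3

/-- The join in the index semilattice {0 < 1, 2 < 3}. -/
def fjoin (a b : ℕ) : ℕ := if a = b then a else if a = 0 then b else if b = 0 then a else 3

/-- The Boolean value of an element within its fibre. -/
def val : Fig → Bool
  | o => true | oi => true | oj => true | _ => false

/-- The element of the fibre with index `n` and Boolean value `v`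
(i.e. the image under the Płonka homomorphisms). -/
def mk' : ℕ → Bool → Fig
  | 0, false => z | 0, true => o
  | 1, false => zi | 1, true => oi
  | 2, false => zj | 2, true => oj
  | _, _ => zk

/-- The Płonka sum join: project both arguments into the join fibre
(along the unique surjective homomorphisms) and take the join there. -/
def fsup (x y : Fig) : Fig := mk' (fjoin (fib x) (fib y)) (val x || val y)

/-- Negation: swap the two elements of each two-element fibre, fix zk. -/
def fneg (x : Fig) : Fig := mk' (fib x) (!val x)

end Fig

/-!
K12 at the top element gives `J₂ 0_k = 0`, and K9 forces every value of `J₂` into the bottom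
fibre `{0, 1}`; then K11 at `1_j` leaves only `J₂ 1_j = 1`. Now K10 with `x = 0_i`, `y = 1_j`
(where `0_i ∨ 1_j = 0_k`) reads `0_i ∨ 1 = 0_i ∨ 0`, that is `1_i = 0_i`.
-/

namespace Fig

abbrev kOps (J : Fig → Fig) : KOps Fig :=
  { sup := fsup, neg := fneg, J := J, zero := z, one := o }

theorem eq_z_or_eq_o_of_fsup_fneg_eq_o {x : Fig} (h : fsup x (fneg x) = o) : x = z ∨ x = o := by
  revert h
  cases x <;> decide

variable {J : Fig → Fig}

theorem J_zk (hJ : @KAlgebra Fig (kOps J)) : J zk = z :=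
  hJ.K12 zk

theorem J_eq_z_or_eq_o (hJ : @KAlgebra Fig (kOps J)) (x : Fig) : J x = z ∨ J x = o :=
  eq_z_or_eq_o_of_fsup_fneg_eq_o (hJ.K9 x)

theorem J_oj (hJ : @KAlgebra Fig (kOps J)) : J oj = o := by
  have h11 : fneg (fsup (fneg oj) (fneg (J oj))) = oj := hJ.K11 oj
  rcases J_eq_z_or_eq_o hJ oj with h | h
  · rw [h] at h11
    exact absurd h11 (by decide)
  · exact h

end Fig

/-- The involutive bisemilattice of Figure 2 cannot be expanded to a K-algebra:
no operation J₂ on it satisfies the identities K1–K12. -/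
theorem stmt19 : ¬ ∃ J : Fig → Fig,
    @KAlgebra Fig { sup := Fig.fsup, neg := Fig.fneg, J := J,
                    zero := Fig.z, one := Fig.o } := by
  rintro ⟨J, hJ⟩
  open Fig in
  have h10 : fsup zi (J oj) = fsup zi (J zk) := hJ.K10 zi oj
  rw [Fig.J_oj hJ, Fig.J_zk hJ] at h10
  exact absurd h10 (by decide)
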